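/- Let V be a finite set of points in the Euclidean plane ℝ², let T be a minimum spanning tree of V whose edge lengths are pairwise distinct, and let N ⊆ V be a nonempty subset with |N| = k. Let B_N = { e_{xy} : x, y ∈ N, x ≠ y } be the set of bottleneck edges of pairs of N. Then: (i) B_N has exactly k − 1 elements; (ii) deleting the edges of B_N from T yields a spanning forest of V with exactly k connected components, each containing exactly one point of N; and (iii) this forest has minimum total length among all spanning forests of the complete Euclidean graph on V that have exactly k components, each containing exactly one point of N. -/

import Mathlib

open scoped BigOperators

noncomputable section

/-- The Euclidean plane. -/
abbrev Pt : Type := EuclideanSpace ℝ (Fin 2)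

/-- The length of an edge (an unordered pair of points): the Euclidean
distance between its endpoints. -/
def edgeLen : Sym2 Pt → ℝ :=
  Sym2.lift ⟨fun a b => dist a b, fun a b => dist_comm a b⟩

/-- The total length of a graph on the plane: the sum of the Euclidean
lengths of its edges. -/
def glength (G : SimpleGraph Pt) : ℝ := ∑ᶠ e ∈ G.edgeSet, edgeLen e

/-- `G` is a spanning tree of the point set `V`: all its edges join points of
`V`, it is acyclic, and all points of `V` are pairwise connected in `G`. -/
def IsSpanningTreeOn (V : Set Pt) (G : SimpleGraph Pt) : Prop :=
  (∀ ⦃x y : Pt⦄, G.Adj x y → x ∈ V ∧ y ∈ V) ∧ G.IsAcyclic ∧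
    ∀ x ∈ V, ∀ y ∈ V, G.Reachable x y

/-- `G` is a minimum spanning tree of the point set `V`. -/
def IsMSTOn (V : Set Pt) (G : SimpleGraph Pt) : Prop :=
  IsSpanningTreeOn V G ∧
    ∀ H : SimpleGraph Pt, IsSpanningTreeOn V H → glength G ≤ glength H

/-- The edges of `T` have pairwise distinct lengths. -/
def DistinctEdgeLengths (T : SimpleGraph Pt) : Prop :=
  ∀ e ∈ T.edgeSet, ∀ f ∈ T.edgeSet, edgeLen e = edgeLen f → e = f

/-- `e` is the (unique) edge of maximum length on the (unique) path in `T`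
from `x` to `y`: it is an edge of `T` lying on every path from `x` to `y`,
and on every such path its length is maximal. -/
def BottleneckEdge (T : SimpleGraph Pt) (x y : Pt) (e : Sym2 Pt) : Prop :=
  e ∈ T.edgeSet ∧
    ∀ p : T.Walk x y, p.IsPath → e ∈ p.edges ∧ ∀ f ∈ p.edges, edgeLen f ≤ edgeLen e

/-!
Every point of `V` is joined to `N` in `F = T \ B`: delete the bottleneck edges longest first.
When `e_{ab}` is deleted, every other edge on the path from `a` to `b` is shorter, hence still
present, so each endpoint of `e_{ab}` stays joined to `a` or to `b`. Two points of `N` are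
separated in `F` because their bottleneck edge is gone. So every component of the forest `F`
contains exactly one point of `N`, and counting the edges of `T` and of `F` gives `|B| = k - 1`.

Minimality is an exchange argument. Deleting an edge `e = s(d, d')` from a forest `H` with one
point of `N` per component leaves `d` in a part without points of `N`, and any edge leaving that
part can be added instead of `e`. If `e ∉ T`, such an edge lies on the `T`-path from `d` to `d'`
and is no longer than `e` by the cut property of the minimum spanning tree. If `e ∈ B`, it lies on
the path from `d` to `N` along the bottleneck path of `e` and is strictly shorter. Hence a shortest
`H` with fewest edges outside `T` lies in `F`, and it is `F` since both have `|V| - k` edges.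
-/

namespace SimpleGraph

variable {α : Type*} {G : SimpleGraph α}

theorem Reachable.deleteEdges_singleton_cases {a b v x : α} (h : G.Reachable v x) :
    (G.deleteEdges {s(a, b)}).Reachable v x ∨
      (G.deleteEdges {s(a, b)}).Reachable v a ∧ (G.deleteEdges {s(a, b)}).Reachable b x ∨
      (G.deleteEdges {s(a, b)}).Reachable v b ∧ (G.deleteEdges {s(a, b)}).Reachable a x := by
  obtain ⟨w⟩ := h
  induction w with
  | nil => exact Or.inl .rfl
  | @cons v w x hvw _ ih =>
    by_cases he : s(v, w) = s(a, b)
    · have hx : (G.deleteEdges {s(a, b)}).Reachable a x ∨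
          (G.deleteEdges {s(a, b)}).Reachable b x := by
        rcases Sym2.eq_iff.1 he with ⟨rfl, rfl⟩ | ⟨rfl, rfl⟩ <;>
          rcases ih with h | ⟨-, h⟩ | ⟨-, h⟩ <;> tauto
      rcases Sym2.eq_iff.1 he with ⟨rfl, rfl⟩ | ⟨rfl, rfl⟩ <;> tauto
    · have hvw' : (G.deleteEdges {s(a, b)}).Reachable v w :=
        Adj.reachable (by simp [hvw, he])
      rcases ih with h | ⟨h, h'⟩ | ⟨h, h'⟩
      exacts [Or.inl (hvw'.trans h), Or.inr (Or.inl ⟨hvw'.trans h, h'⟩),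
        Or.inr (Or.inr ⟨hvw'.trans h, h'⟩)]

theorem IsAcyclic.not_reachable_deleteEdges_of_adj (hG : G.IsAcyclic) {u v : α}
    (h : G.Adj u v) : ¬(G.deleteEdges {s(u, v)}).Reachable u v :=
  isBridge_iff.1 (isAcyclic_iff_forall_isBridge.1 hG (e := s(u, v)) h)

theorem IsAcyclic.not_reachable_deleteEdges_of_mem_edges (hG : G.IsAcyclic) {x y : α}
    {p : G.Walk x y} (hp : p.IsPath) {e : Sym2 α} (he : e ∈ p.edges) :
    ¬(G.deleteEdges {e}).Reachable x y := by
  classical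
  cases e with | h u v
  rw [reachable_deleteEdges_iff_exists_walk]
  rintro ⟨q, hq⟩
  obtain rfl : q.bypass = p :=
    congrArg Subtype.val ((hG.subsingleton_path x y).elim ⟨_, q.bypass_isPath⟩ ⟨p, hp⟩)
  exact hq (q.edges_bypass_subset_edges he)

theorem edgeSet_subset_sym2 {V : Finset α} (hG : ∀ ⦃x y⦄, G.Adj x y → x ∈ V ∧ y ∈ V) :
    G.edgeSet ⊆ V.sym2 := by
  rintro ⟨x, y⟩ h
  exact Finset.mk_mem_sym2_iff.2 (hG h)

theorem edgeSet_finite_of_adj_mem {V : Finset α} (hG : ∀ ⦃x y⦄, G.Adj x y → x ∈ V ∧ y ∈ V) :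
    G.edgeSet.Finite :=
  V.sym2.finite_toSet.subset (edgeSet_subset_sym2 hG)

theorem finite_setOf_adj_mem (V : Finset α) :
    {G : SimpleGraph α | ∀ ⦃x y⦄, G.Adj x y → x ∈ V ∧ y ∈ V}.Finite :=
  (V.sym2.finite_toSet.finite_subsets.preimage edgeSet_injective.injOn).subset
    fun _ hG => edgeSet_subset_sym2 hG

theorem fromEdgeSet_edgeSet_sdiff (G : SimpleGraph α) (s : Set (Sym2 α)) :
    fromEdgeSet (G.edgeSet \ s) = G.deleteEdges s := by
  ext x y
  simp only [fromEdgeSet_adj, Set.mem_sdiff, mem_edgeSet, deleteEdges_adj]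
  exact ⟨fun h => h.1, fun h => ⟨h, h.1.ne⟩⟩

structure IsRootedSpanningForest (G : SimpleGraph α) (V N : Set α) : Prop where
  adj_mem : ∀ ⦃x y⦄, G.Adj x y → x ∈ V ∧ y ∈ V
  isAcyclic : G.IsAcyclic
  exists_reachable : ∀ v ∈ V, ∃ x ∈ N, G.Reachable v x
  eq_of_reachable : ∀ x ∈ N, ∀ y ∈ N, G.Reachable x y → x = y

namespace IsRootedSpanningForest

variable {V N : Set α}

theorem exists_deleteEdges (hG : G.IsRootedSpanningForest V N) {e : Sym2 α}
    (he : e ∈ G.edgeSet) : ∃ d d', e = s(d, d') ∧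
      (∀ x ∈ N, ¬(G.deleteEdges {e}).Reachable d x) ∧
      (G.deleteEdges {e}).IsRootedSpanningForest V (insert d N) := by
  cases e with | h u v
  set K := G.deleteEdges {s(u, v)}
  have hKG : K ≤ G := deleteEdges_le _
  obtain ⟨x₁, hx₁, hux₁⟩ := hG.exists_reachable u (hG.adj_mem he).1
  obtain ⟨d, d', hdd', hd'x₁⟩ : ∃ d d', s(u, v) = s(d, d') ∧ K.Reachable d' x₁ := by
    rcases hux₁.deleteEdges_singleton_cases (a := u) (b := v) with h | ⟨-, h⟩ | ⟨h, -⟩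
    exacts [⟨v, u, Sym2.eq_swap, h⟩, ⟨u, v, rfl, h⟩,
      absurd h (hG.isAcyclic.not_reachable_deleteEdges_of_adj he)]
  have hK : K = G.deleteEdges {s(d, d')} := by rw [← hdd']
  rw [hdd'] at he
  have hdd'K : ¬K.Reachable d d' := hK ▸ hG.isAcyclic.not_reachable_deleteEdges_of_adj he
  have hdN : ∀ x ∈ N, ¬K.Reachable d x := by
    intro x hx hdx
    obtain rfl : x = x₁ := hG.eq_of_reachable x hx x₁ hx₁
      ((hdx.mono hKG).symm.trans ((Adj.reachable he).trans (hd'x₁.mono hKG)))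
    exact hdd'K (hdx.trans hd'x₁.symm)
  refine ⟨d, d', hdd', hdN, fun x y h => hG.adj_mem (hKG h), hG.isAcyclic.anti hKG, ?_, ?_⟩
  · intro w hw
    obtain ⟨x, hx, hwx⟩ := hG.exists_reachable w hw
    rw [hK] at hd'x₁ ⊢
    rcases hwx.deleteEdges_singleton_cases (a := d) (b := d') with h | ⟨h, -⟩ | ⟨h, -⟩
    exacts [⟨x, Set.mem_insert_of_mem _ hx, h⟩, ⟨d, Set.mem_insert _ _, h⟩,
      ⟨x₁, Set.mem_insert_of_mem _ hx₁, h.trans hd'x₁⟩]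
  · rintro x (rfl | hx) y (rfl | hy) h
    exacts [rfl, absurd h (hdN y hy), absurd h.symm (hdN x hx),
      hG.eq_of_reachable x hx y hy (h.mono hKG)]

theorem sup_edge {d p q : α} (hG : G.IsRootedSpanningForest V (insert d N))
    (hd : ∀ x ∈ N, ¬G.Reachable d x) (hp : p ∈ V) (hq : q ∈ V) (hdp : G.Reachable d p)
    (hdq : ¬G.Reachable d q) : (G ⊔ edge p q).IsRootedSpanningForest V N := by
  have hpq : ¬G.Reachable p q := fun h => hdq (hdp.trans h)
  have hne : p ≠ q := fun h => hpq (h ▸ .rfl)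
  have hadj : (G ⊔ edge p q).Adj p q := .inr ((edge_adj _ _ _ _).2 ⟨.inl ⟨rfl, rfl⟩, hne⟩)
  have hdel : (G ⊔ edge p q).deleteEdges {s(p, q)} = G := by
    have : ¬G.Adj p q := fun h => hpq h.reachable
    simp [this]
  refine ⟨?_, hG.isAcyclic.sup_edge_of_not_reachable hpq, ?_, ?_⟩
  · rintro x y (h | h)
    · exact hG.adj_mem h
    · rcases ((edge_adj _ _ _ _).1 h).1 with ⟨rfl, rfl⟩ | ⟨rfl, rfl⟩
      exacts [⟨hp, hq⟩, ⟨hq, hp⟩]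
  · intro w hw
    obtain ⟨x, rfl | hx, hwx⟩ := hG.exists_reachable w hw
    · obtain ⟨y, rfl | hy, hqy⟩ := hG.exists_reachable q hq
      · exact absurd hqy.symm hdq
      · exact ⟨y, hy, ((hwx.trans hdp).mono le_sup_left).trans
          (hadj.reachable.trans (hqy.mono le_sup_left))⟩
    · exact ⟨x, hx, hwx.mono le_sup_left⟩
  · intro x hx y hy h
    rcases h.deleteEdges_singleton_cases (a := p) (b := q) with h | ⟨h, -⟩ | ⟨-, h⟩ <;>
      rw [hdel] at h
    · exact hG.eq_of_reachable x (.inr hx) y (.inr hy) h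
    · exact absurd (hdp.trans h.symm) (hd x hx)
    · exact absurd (hdp.trans h) (hd y hy)

theorem exists_sup_edge_of_walk {G' : SimpleGraph α} {d t : α}
    (hG : G.IsRootedSpanningForest V (insert d N)) (hd : ∀ x ∈ N, ¬G.Reachable d x)
    (hG' : ∀ ⦃x y⦄, G'.Adj x y → x ∈ V ∧ y ∈ V) (W : G'.Walk d t) (ht : ¬G.Reachable d t) :
    ∃ p q, s(p, q) ∈ W.edges ∧ ¬G.Reachable p q ∧
      (G ⊔ edge p q).IsRootedSpanningForest V N := by
  obtain ⟨D, hD, hp, hq⟩ := W.exists_boundary_dart {x | G.Reachable d x} .rfl ht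
  refine ⟨D.fst, D.snd, List.mem_map_of_mem hD, fun h => hq (hp.trans h), ?_⟩
  exact hG.sup_edge hd (hG' D.adj).1 (hG' D.adj).2 hp hq

theorem ncard_edgeSet_add_card {V N : Finset α} (hG : G.IsRootedSpanningForest V N)
    (hNV : N ⊆ V) : G.edgeSet.ncard + N.card = V.card := by
  classical
  induction hn : G.edgeSet.ncard generalizing G N with
  | zero =>
    have hbot : G = ⊥ := edgeSet_eq_empty.1 <|
      (Set.ncard_eq_zero (edgeSet_finite_of_adj_mem hG.adj_mem)).1 hn
    subst hbot
    have hVN : V ⊆ N := fun v hv => by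
      obtain ⟨x, hx, hvx⟩ := hG.exists_reachable v hv
      rwa [reachable_bot.1 hvx]
    simp [Finset.Subset.antisymm hNV hVN]
  | succ n ih =>
    obtain ⟨e, he⟩ := Set.nonempty_of_ncard_ne_zero (by rw [hn]; omega)
    obtain ⟨d, d', rfl, hdN, hK⟩ := hG.exists_deleteEdges he
    have hdV : d ∈ V := (hG.adj_mem he).1
    have hdN' : d ∉ N := fun h => hdN d h .rfl
    rw [← Finset.coe_insert] at hK
    have := ih hK (Finset.insert_subset hdV hNV)
      (by rw [edgeSet_deleteEdges, Set.ncard_sdiff_singleton_of_mem he, hn]; rfl)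
    rw [Finset.card_insert_of_notMem hdN'] at this
    omega

end IsRootedSpanningForest

end SimpleGraph

open SimpleGraph

theorem edgeLen_mk (x y : Pt) : edgeLen s(x, y) = dist x y := rfl

theorem glength_deleteEdges_singleton {G : SimpleGraph Pt} (hG : G.edgeSet.Finite)
    {e : Sym2 Pt} (he : e ∈ G.edgeSet) :
    glength (G.deleteEdges {e}) = glength G - edgeLen e := by
  have he' : e ∉ G.edgeSet \ {e} := fun h => h.2 rfl
  rw [eq_sub_iff_add_eq, add_comm, glength, glength, edgeSet_deleteEdges,
    ← finsum_mem_insert _ he' hG.sdiff, Set.insert_sdiff_self_of_mem he]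

theorem glength_sup_edge {G : SimpleGraph Pt} (hG : G.edgeSet.Finite) {p q : Pt}
    (hpq : ¬G.Reachable p q) : glength (G ⊔ edge p q) = glength G + dist p q := by
  have hne : p ≠ q := fun h => hpq (h ▸ .rfl)
  have hpq' : s(p, q) ∉ G.edgeSet := fun h => hpq (Adj.reachable h)
  rw [glength, glength, edgeSet_sup, edgeSet_edge_of_ne hne, Set.union_singleton,
    finsum_mem_insert _ hpq' hG, add_comm]
  rfl

theorem glength_deleteEdges_sup_edge {G : SimpleGraph Pt} (hG : G.edgeSet.Finite)
    {e : Sym2 Pt} (he : e ∈ G.edgeSet) {p q : Pt} (hpq : ¬(G.deleteEdges {e}).Reachable p q) :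
    glength (G.deleteEdges {e} ⊔ edge p q) = glength G - edgeLen e + dist p q := by
  rw [glength_sup_edge (hG.subset (edgeSet_subset_edgeSet.2 (deleteEdges_le _))) hpq,
    glength_deleteEdges_singleton hG he]

theorem isSpanningTreeOn_iff_isRootedSpanningForest {V : Set Pt} {T : SimpleGraph Pt} {r : Pt}
    (hr : r ∈ V) : IsSpanningTreeOn V T ↔ T.IsRootedSpanningForest V {r} := by
  refine ⟨fun ⟨hV, hac, hconn⟩ => ⟨hV, hac, fun v hv => ⟨r, rfl, hconn v hv r hr⟩, ?_⟩,
    fun hT => ⟨hT.adj_mem, hT.isAcyclic, fun x hx y hy => ?_⟩⟩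
  · rintro x rfl y rfl -
    rfl
  · obtain ⟨_, rfl, hxr⟩ := hT.exists_reachable x hx
    obtain ⟨_, rfl, hyr⟩ := hT.exists_reachable y hy
    exact hxr.trans hyr.symm

theorem IsSpanningTreeOn.ncard_edgeSet_add_one {V : Finset Pt} {T : SimpleGraph Pt}
    (hT : IsSpanningTreeOn ↑V T) {r : Pt} (hr : r ∈ V) : T.edgeSet.ncard + 1 = V.card := by
  have hT' := (isSpanningTreeOn_iff_isRootedSpanningForest (Finset.mem_coe.2 hr)).1 hT
  rw [← Finset.coe_singleton] at hT'
  simpa using hT'.ncard_edgeSet_add_card (Finset.singleton_subset_iff.2 hr)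

theorem IsMSTOn.edgeLen_le_of_not_reachable_deleteEdges {V : Finset Pt} {T : SimpleGraph Pt}
    (hT : IsMSTOn ↑V T) {f : Sym2 Pt} (hf : f ∈ T.edgeSet) {u v : Pt} (hu : u ∈ V) (hv : v ∈ V)
    (huv : ¬(T.deleteEdges {f}).Reachable u v) : edgeLen f ≤ dist u v := by
  have hT' := (isSpanningTreeOn_iff_isRootedSpanningForest (Finset.mem_coe.2 hu)).1 hT.1
  obtain ⟨d, d', rfl, hdu, hK⟩ := hT'.exists_deleteEdges hf
  have hdv : (T.deleteEdges {s(d, d')}).Reachable d v := by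
    obtain ⟨x, rfl | rfl, hvx⟩ := hK.exists_reachable v hv
    exacts [hvx.symm, absurd hvx.symm huv]
  have hT'' := hK.sup_edge hdu hv hu hdv (hdu u rfl)
  have hfin : T.edgeSet.Finite := edgeSet_finite_of_adj_mem hT.1.1
  have := hT.2 _ ((isSpanningTreeOn_iff_isRootedSpanningForest (Finset.mem_coe.2 hu)).2 hT'')
  rw [glength_deleteEdges_sup_edge hfin hf fun h => huv h.symm, _root_.dist_comm] at this
  linarith

theorem exists_bottleneckEdge {T : SimpleGraph Pt} (hT : T.IsAcyclic) {x y : Pt}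
    (hxy : T.Reachable x y) (hne : x ≠ y) : ∃ e, BottleneckEdge T x y e := by
  obtain ⟨p, hp⟩ := hxy.exists_isPath
  have hnil : p.edges.toFinset.Nonempty := by
    simpa [Walk.edges_eq_nil, ← Walk.length_eq_zero_iff] using
      fun h => hne (Walk.eq_of_length_eq_zero h)
  obtain ⟨e, he, hmax⟩ := p.edges.toFinset.exists_max_image edgeLen hnil
  rw [List.mem_toFinset] at he
  refine ⟨e, p.edges_subset_edgeSet he, fun q hq => ?_⟩
  obtain rfl : q = p :=
    congrArg Subtype.val ((hT.subsingleton_path x y).elim ⟨q, hq⟩ ⟨p, hp⟩)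
  exact ⟨he, fun f hf => hmax f (List.mem_toFinset.2 hf)⟩

theorem BottleneckEdge.not_reachable_deleteEdges {T : SimpleGraph Pt} {x y : Pt} {e : Sym2 Pt}
    (h : BottleneckEdge T x y e) : ¬(T.deleteEdges {e}).Reachable x y := by
  classical
  cases e with | h u v
  rw [reachable_deleteEdges_iff_exists_walk]
  rintro ⟨q, hq⟩
  exact hq (q.edges_bypass_subset_edges (h.2 _ q.bypass_isPath).1)

theorem BottleneckEdge.reachable_deleteEdges_of_mem {T G : SimpleGraph Pt} {a b : Pt}
    {e : Sym2 Pt} (h : BottleneckEdge T a b e) (hab : T.Reachable a b) (hGT : G ≤ T)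
    (hG : ∀ f ∈ T.edgeSet, edgeLen f ≤ edgeLen e → f ∈ G.edgeSet) {z : Pt} (hz : z ∈ e) :
    (G.deleteEdges {e}).Reachable z a ∨ (G.deleteEdges {e}).Reachable z b := by
  obtain ⟨p, hp⟩ := hab.exists_isPath
  have hGab : G.Reachable a b :=
    ⟨p.transfer G fun f hf => hG f (p.edges_subset_edgeSet hf) ((h.2 p hp).2 f hf)⟩
  cases e with | h g₁ g₂
  rcases hGab.deleteEdges_singleton_cases (a := g₁) (b := g₂) with h' | ⟨h₁, h₂⟩ | ⟨h₁, h₂⟩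
  · exact absurd (h'.mono (deleteEdges_mono hGT)) h.not_reachable_deleteEdges
  · rcases Sym2.mem_iff.1 hz with rfl | rfl
    exacts [.inl h₁.symm, .inr h₂]
  · rcases Sym2.mem_iff.1 hz with rfl | rfl
    exacts [.inr h₂, .inl h₁.symm]

def bottleneckEdges (T : SimpleGraph Pt) (N : Set Pt) : Set (Sym2 Pt) :=
  {e | ∃ x ∈ N, ∃ y ∈ N, x ≠ y ∧ BottleneckEdge T x y e}

section BottleneckForest

variable {V N : Finset Pt} {T : SimpleGraph Pt}

theorem bottleneckEdges_subset_edgeSet : bottleneckEdges T N ⊆ T.edgeSet :=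
  fun _ ⟨_, _, _, _, _, he⟩ => he.1

theorem exists_reachable_deleteEdges_bottleneckEdges (hT : IsSpanningTreeOn ↑V T)
    (hdist : DistinctEdgeLengths T) (hNV : N ⊆ V) (hN : N.Nonempty) {v : Pt} (hv : v ∈ V) :
    ∃ x ∈ N, (T.deleteEdges (bottleneckEdges T N)).Reachable v x := by
  classical
  have hfin : (bottleneckEdges T N).Finite :=
    (edgeSet_finite_of_adj_mem hT.1).subset bottleneckEdges_subset_edgeSet
  suffices ∀ s : Finset (Sym2 Pt), ↑s ⊆ bottleneckEdges T N →
      ∃ x ∈ N, (T.deleteEdges ↑s).Reachable v x by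
    simpa using this hfin.toFinset (by simp)
  intro s
  induction s using Finset.induction_on_min_value edgeLen with
  | empty =>
    obtain ⟨x, hx⟩ := hN
    exact fun _ => ⟨x, hx, by simpa using hT.2.2 v hv x (hNV hx)⟩
  | insert g s hgs hmin ih =>
    intro hsub
    rw [Finset.coe_insert, Set.insert_subset_iff] at hsub
    obtain ⟨x, hx, hvx⟩ := ih hsub.2
    obtain ⟨a, ha, b, hb, -, hg⟩ := hsub.1
    have hlen : ∀ f ∈ T.edgeSet, edgeLen f ≤ edgeLen g → f ∈ (T.deleteEdges ↑s).edgeSet := by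
      intro f hf hfg
      rw [edgeSet_deleteEdges]
      refine ⟨hf, fun hfs => hgs ?_⟩
      obtain rfl := hdist f hf g hg.1 (le_antisymm hfg (hmin f hfs))
      exact hfs
    have hsplit {z : Pt} (hz : z ∈ g) :=
      hg.reachable_deleteEdges_of_mem (hT.2.2 a (hNV ha) b (hNV hb)) (deleteEdges_le _) hlen hz
    rw [Finset.coe_insert, Set.insert_eq, Set.union_comm, ← deleteEdges_deleteEdges]
    cases g with | h g₁ g₂
    rcases hvx.deleteEdges_singleton_cases (a := g₁) (b := g₂) with h | ⟨h, -⟩ | ⟨h, -⟩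
    · exact ⟨x, hx, h⟩
    · rcases hsplit (Sym2.mem_mk_left g₁ g₂) with h' | h'
      exacts [⟨a, ha, h.trans h'⟩, ⟨b, hb, h.trans h'⟩]
    · rcases hsplit (Sym2.mem_mk_right g₁ g₂) with h' | h'
      exacts [⟨a, ha, h.trans h'⟩, ⟨b, hb, h.trans h'⟩]

theorem isRootedSpanningForest_deleteEdges_bottleneckEdges (hT : IsSpanningTreeOn ↑V T)
    (hdist : DistinctEdgeLengths T) (hNV : N ⊆ V) (hN : N.Nonempty) :
    (T.deleteEdges (bottleneckEdges T N)).IsRootedSpanningForest V N where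
  adj_mem _ _ h := hT.1 (deleteEdges_le _ h)
  isAcyclic := hT.2.1.anti (deleteEdges_le _)
  exists_reachable _ hv := exists_reachable_deleteEdges_bottleneckEdges hT hdist hNV hN hv
  eq_of_reachable x hx y hy h := by
    by_contra hxy
    obtain ⟨e, he⟩ := exists_bottleneckEdge hT.2.1 (hT.2.2 x (hNV hx) y (hNV hy)) hxy
    exact he.not_reachable_deleteEdges
      (h.mono (deleteEdges_anti (Set.singleton_subset_iff.2
        (show e ∈ bottleneckEdges T N from ⟨x, hx, y, hy, hxy, he⟩))))

theorem ncard_bottleneckEdges (hT : IsSpanningTreeOn ↑V T) (hdist : DistinctEdgeLengths T)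
    (hNV : N ⊆ V) (hN : N.Nonempty) : (bottleneckEdges T N).ncard = N.card - 1 := by
  have hF := isRootedSpanningForest_deleteEdges_bottleneckEdges hT hdist hNV hN
  have hFcard := hF.ncard_edgeSet_add_card hNV
  have hTcard := hT.ncard_edgeSet_add_one (hNV hN.choose_spec)
  have hfin : T.edgeSet.Finite := edgeSet_finite_of_adj_mem hT.1
  have hB : bottleneckEdges T N ⊆ T.edgeSet := bottleneckEdges_subset_edgeSet
  rw [edgeSet_deleteEdges, Set.ncard_sdiff hB (hfin.subset hB)] at hFcard
  have := Set.ncard_le_ncard hB hfin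
  omega

end BottleneckForest

section Exchange

variable {V N : Finset Pt} {T H : SimpleGraph Pt}

theorem IsMSTOn.exists_exchange_of_notMem_edgeSet (hT : IsMSTOn ↑V T)
    (hH : H.IsRootedSpanningForest V N) {e : Sym2 Pt} (heH : e ∈ H.edgeSet)
    (heT : e ∉ T.edgeSet) :
    ∃ H' : SimpleGraph Pt, H'.IsRootedSpanningForest V N ∧ glength H' ≤ glength H ∧
      H'.edgeSet \ T.edgeSet ⊂ H.edgeSet \ T.edgeSet := by
  obtain ⟨d, d', rfl, hdN, hK⟩ := hH.exists_deleteEdges heH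
  have hd : d ∈ V := (hH.adj_mem heH).1
  have hd' : d' ∈ V := (hH.adj_mem heH).2
  obtain ⟨W, hW⟩ := (hT.1.2.2 d hd d' hd').exists_isPath
  obtain ⟨p, q, hpq, hKpq, hH'⟩ := hK.exists_sup_edge_of_walk hdN hT.1.1 W
    (hH.isAcyclic.not_reachable_deleteEdges_of_adj heH)
  have hpqT : s(p, q) ∈ T.edgeSet := W.edges_subset_edgeSet hpq
  have hfin : H.edgeSet.Finite := edgeSet_finite_of_adj_mem hH.adj_mem
  refine ⟨_, hH', ?_, ?_⟩
  · have := hT.edgeLen_le_of_not_reachable_deleteEdges hpqT hd hd'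
      (hT.1.2.1.not_reachable_deleteEdges_of_mem_edges hW hpq)
    rw [glength_deleteEdges_sup_edge hfin heH hKpq]
    rw [edgeLen_mk] at this ⊢
    linarith
  · have hne : p ≠ q := fun h => hKpq (h ▸ .rfl)
    have : (H.deleteEdges {s(d, d')} ⊔ edge p q).edgeSet \ T.edgeSet =
        (H.edgeSet \ T.edgeSet) \ {s(d, d')} := by
      rw [edgeSet_sup, edgeSet_deleteEdges, edgeSet_edge_of_ne hne, Set.union_sdiff_distrib,
        Set.sdiff_eq_empty.2 (Set.singleton_subset_iff.2 hpqT), Set.union_empty, sdiff_right_comm]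
    rw [this]
    exact Set.sdiff_singleton_ssubset.2 ⟨heH, heT⟩

theorem exists_exchange_of_mem_bottleneckEdges (hT : IsSpanningTreeOn ↑V T)
    (hdist : DistinctEdgeLengths T) (hNV : N ⊆ V) (hH : H.IsRootedSpanningForest V N)
    (hHT : H ≤ T) {e : Sym2 Pt} (heH : e ∈ H.edgeSet) (heB : e ∈ bottleneckEdges T N) :
    ∃ H' : SimpleGraph Pt, H'.IsRootedSpanningForest V N ∧ H' ≤ T ∧ glength H' < glength H := by
  obtain ⟨a, ha, b, hb, -, hab⟩ := heB
  obtain ⟨d, d', rfl, hdN, hK⟩ := hH.exists_deleteEdges heH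
  set G := T.deleteEdges {f | edgeLen s(d, d') < edgeLen f}
  have hGT : G ≤ T := deleteEdges_le _
  obtain ⟨t, ht, ⟨W⟩⟩ : ∃ t ∈ N, (G.deleteEdges {s(d, d')}).Reachable d t := by
    have hG : ∀ f ∈ T.edgeSet, edgeLen f ≤ edgeLen s(d, d') → f ∈ G.edgeSet := by
      intro f hf hle
      rw [edgeSet_deleteEdges]
      exact ⟨hf, not_lt.2 hle⟩
    rcases hab.reachable_deleteEdges_of_mem (hT.2.2 a (hNV ha) b (hNV hb)) hGT hG
      (Sym2.mem_mk_left d d') with h | h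
    exacts [⟨a, ha, h⟩, ⟨b, hb, h⟩]
  obtain ⟨p, q, hpq, hKpq, hH'⟩ := hK.exists_sup_edge_of_walk hdN
    (fun x y h => hT.1 (hGT (deleteEdges_le _ h))) W (hdN t ht)
  have hpqG := W.edges_subset_edgeSet hpq
  rw [edgeSet_deleteEdges, edgeSet_deleteEdges] at hpqG
  obtain ⟨⟨hpqT, hle⟩, hne⟩ := hpqG
  have hlt : edgeLen s(p, q) < edgeLen s(d, d') :=
    lt_of_le_of_ne (not_lt.1 hle) fun h => hne (hdist _ hpqT _ (hHT heH) h)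
  have hfin : H.edgeSet.Finite := edgeSet_finite_of_adj_mem hH.adj_mem
  refine ⟨_, hH', sup_le ((deleteEdges_le _).trans hHT)
    ((edge_le _ _ _).2 (Set.sdiff_subset.trans (Set.singleton_subset_iff.2 hpqT))), ?_⟩
  rw [glength_deleteEdges_sup_edge hfin heH hKpq]
  rw [edgeLen_mk] at hlt
  linarith

theorem IsMSTOn.glength_deleteEdges_bottleneckEdges_le (hT : IsMSTOn ↑V T)
    (hdist : DistinctEdgeLengths T) (hNV : N ⊆ V) (hN : N.Nonempty)
    (hH : H.IsRootedSpanningForest V N) :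
    glength (T.deleteEdges (bottleneckEdges T N)) ≤ glength H := by
  have hF := isRootedSpanningForest_deleteEdges_bottleneckEdges hT.1 hdist hNV hN
  obtain ⟨H₀, hH₀, hmin⟩ := Set.exists_min_image {G : SimpleGraph Pt | G.IsRootedSpanningForest V N}
    (fun G => toLex (glength G, (G.edgeSet \ T.edgeSet).ncard))
    ((finite_setOf_adj_mem V).subset fun G hG => hG.adj_mem) ⟨H, hH⟩
  have hfin : H₀.edgeSet.Finite := edgeSet_finite_of_adj_mem hH₀.adj_mem
  have hH₀T : H₀ ≤ T := by
    refine edgeSet_subset_edgeSet.1 fun e he => ?_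
    by_contra heT
    obtain ⟨H', hH', hle, hlt⟩ := hT.exists_exchange_of_notMem_edgeSet hH₀ he heT
    have hlt := Set.ncard_lt_ncard hlt hfin.sdiff
    rcases Prod.Lex.le_iff.1 (hmin H' hH') with h | ⟨-, h⟩
    · exact absurd hle (not_le.2 h)
    · exact absurd hlt (not_lt.2 h)
  have hH₀F : H₀ = T.deleteEdges (bottleneckEdges T N) := by
    refine edgeSet_injective (Set.eq_of_subset_of_ncard_le (fun e he => ?_) ?_
      (edgeSet_finite_of_adj_mem hF.adj_mem))
    · rw [edgeSet_deleteEdges]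
      refine ⟨edgeSet_subset_edgeSet.2 hH₀T he, fun heB => ?_⟩
      obtain ⟨H', hH', -, hlt⟩ :=
        exists_exchange_of_mem_bottleneckEdges hT.1 hdist hNV hH₀ hH₀T he heB
      exact absurd (Prod.Lex.monotone_fst _ _ (hmin H' hH')) (not_le.2 hlt)
    · have := hF.ncard_edgeSet_add_card hNV
      have := hH₀.ncard_edgeSet_add_card hNV
      omega
  exact hH₀F ▸ Prod.Lex.monotone_fst _ _ (hmin H hH)

end Exchange

theorem stmt8 (V : Finset Pt) (T : SimpleGraph Pt) (hT : IsMSTOn ↑V T)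
    (hdist : DistinctEdgeLengths T)
    (N : Finset Pt) (hNV : N ⊆ V) (hN : N.Nonempty)
    (k : ℕ) (hk : N.card = k)
    (B : Set (Sym2 Pt))
    (hB : B = { e | ∃ x ∈ N, ∃ y ∈ N, x ≠ y ∧ BottleneckEdge T x y e })
    (F : SimpleGraph Pt) (hF : F = SimpleGraph.fromEdgeSet (T.edgeSet \ B)) :
    -- (i) there are exactly `k - 1` bottleneck edges
    B.ncard = k - 1 ∧
    -- (ii) deleting them yields a spanning forest of `V` with exactly `k`
    -- components, each containing exactly one point of `N`
    ((∀ ⦃x y : Pt⦄, F.Adj x y → x ∈ V ∧ y ∈ V) ∧ F.IsAcyclic ∧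
      (∀ v ∈ V, ∃ x ∈ N, F.Reachable v x) ∧
      (∀ x ∈ N, ∀ y ∈ N, F.Reachable x y → x = y)) ∧
    -- (iii) this forest is of minimum total length among all such forests
    (∀ H : SimpleGraph Pt,
      (∀ ⦃x y : Pt⦄, H.Adj x y → x ∈ V ∧ y ∈ V) → H.IsAcyclic →
      (∀ v ∈ V, ∃ x ∈ N, H.Reachable v x) →
      (∀ x ∈ N, ∀ y ∈ N, H.Reachable x y → x = y) →
      glength F ≤ glength H) := by
  obtain rfl : B = bottleneckEdges T N := hB
  obtain rfl : F = T.deleteEdges (bottleneckEdges T N) := hF.trans (fromEdgeSet_edgeSet_sdiff _ _)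
  have hF := isRootedSpanningForest_deleteEdges_bottleneckEdges hT.1 hdist hNV hN
  exact ⟨hk ▸ ncard_bottleneckEdges hT.1 hdist hNV hN,
    ⟨hF.adj_mem, hF.isAcyclic, hF.exists_reachable, hF.eq_of_reachable⟩,
    fun H h₁ h₂ h₃ h₄ => hT.glength_deleteEdges_bottleneckEdges_le hdist hNV hN ⟨h₁, h₂, h₃, h₄⟩⟩
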